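/- arXiv:2210.13320 — 3 statements merged into one kernel-verified Lean document; each statement's English description precedes it below -/
import Mathlib

section
/- Let A₁, …, Aₖ be finite sets. Then the cardinality of their k-fold symmetric difference satisfies |A₁ ⊕ A₂ ⊕ ⋯ ⊕ Aₖ| = Σ_{l=1}^{k} (−1)^{l−1} · 2^{l−1} · Σ_{S ⊆ {1,…,k}, |S| = l} |⋂_{i ∈ S} Aᵢ|. -/
/-!
Double counting over `U = ⋃ i, A i`. A point lying in exactly `m ≥ 1` of the sets lies in
`choose m l` of the `l`-fold intersections, so the right-hand side counts it
`∑_{l ≥ 1} (-1)^(l-1) 2^(l-1) choose m l = (1 - (1 - 2)^m) / 2` times: once if `m` is odd and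
not at all if `m` is even, exactly as the symmetric difference does.
-/

/-- `desc T r v` is the set of descendants of `v` in the tree `T` rooted at `r`
(vertices `u` such that `v` lies on every path from `r` to `u`), including `v` itself. -/
def desc {V : Type*} (T : SimpleGraph V) (r v : V) : Set V :=
  {u | ∀ p : T.Walk r u, p.IsPath → v ∈ p.support}

/-- `cut G A` is `δ(A)`: the set of edges of `G` with exactly one endpoint in `A`. -/
def cut {V : Type*} (G : SimpleGraph V) (A : Set V) : Set (Sym2 V) :=
  {e | e ∈ G.edgeSet ∧ ∃ x y, e = s(x, y) ∧ x ∈ A ∧ y ∉ A}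

open Classical in
/-- `xorFam s A` is the symmetric difference `⊕_{i ∈ s} A i`:
an element belongs to it iff it belongs to an odd number of the sets `A i`. -/
noncomputable def xorFam {ι α : Type*} (s : Finset ι) (A : ι → Set α) : Set α :=
  {x | Odd (s.filter (fun i => x ∈ A i)).card}

open Finset

lemma sum_Icc_neg_one_pow_mul_two_pow_mul_choose {m k : ℕ} (hm : m ≤ k) :
    ∑ l ∈ Icc 1 k, (-1 : ℤ) ^ (l - 1) * 2 ^ (l - 1) * m.choose l =
      if Odd m then 1 else 0 := by
  have hbinom : ∑ l ∈ range (k + 1), (-2 : ℤ) ^ l * m.choose l = (-1) ^ m := by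
    rw [← sum_subset (range_subset_range.2 (Nat.succ_le_succ hm)) fun l _ hl ↦ by
      rw [Nat.choose_eq_zero_of_lt (by simp_all), Nat.cast_zero, mul_zero]]
    simpa using (add_pow (-2 : ℤ) 1 m).symm
  have hterm : ∀ l ∈ Icc 1 k,
      -2 * ((-1 : ℤ) ^ (l - 1) * 2 ^ (l - 1) * m.choose l) = (-2) ^ l * m.choose l := by
    intro l hl
    obtain ⟨j, rfl⟩ := Nat.exists_eq_add_of_le' (mem_Icc.1 hl).1
    rw [Nat.add_sub_cancel, neg_pow (2 : ℤ)]
    ring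
  rw [Nat.range_succ_eq_Icc_zero, ← insert_Icc_succ_left_eq_Icc (Nat.zero_le k),
    sum_insert (by simp), Nat.succ_eq_succ, Nat.succ_eq_add_one, zero_add,
    ← sum_congr rfl hterm, ← mul_sum] at hbinom
  simp only [pow_zero, Nat.choose_zero_right, Nat.cast_one, one_mul] at hbinom
  rcases Nat.even_or_odd m with heven | hodd
  · rw [heven.neg_one_pow] at hbinom
    rw [if_neg (Nat.not_odd_iff_even.2 heven)]
    linarith
  · rw [hodd.neg_one_pow] at hbinom
    rw [if_pos hodd]
    linarith

lemma Set.ncard_eq_sum_ite {α R : Type*} [AddCommMonoidWithOne R] {s : Set α} {U : Finset α}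
    (h : s ⊆ U) [DecidablePred (· ∈ s)] :
    (s.ncard : R) = ∑ x ∈ U, if x ∈ s then 1 else 0 := by
  rw [← natCast_card_filter, ← Set.ncard_coe_finset]
  congr
  ext x
  simpa using fun hx ↦ h hx

lemma sum_ite_subset_eq_choose {ι : Type*} [Fintype ι] [DecidableEq ι]
    (T : Finset ι) (l : ℕ) :
    ∑ S ∈ univ.filter (fun S : Finset ι ↦ S.card = l), (if S ⊆ T then 1 else 0 : ℤ) =
      (#T).choose l := by
  rw [sum_boole, filter_filter, ← card_powersetCard]
  congr
  ext S
  simp [mem_powersetCard, and_comm]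

lemma sum_Icc_neg_one_pow_mul_two_pow_mul_card_subsets {ι : Type*} [Fintype ι] [DecidableEq ι]
    (T : Finset ι) :
    ∑ l ∈ Icc 1 (Fintype.card ι), (-1 : ℤ) ^ (l - 1) * 2 ^ (l - 1) *
        ∑ S ∈ univ.filter (fun S : Finset ι ↦ S.card = l), (if S ⊆ T then 1 else 0 : ℤ) =
      if Odd #T then 1 else 0 := by
  simp only [sum_ite_subset_eq_choose]
  exact sum_Icc_neg_one_pow_mul_two_pow_mul_choose (card_le_univ T)

theorem ncard_xorFam_univ {ι α : Type*} [Fintype ι] (A : ι → Set α)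
    (hfin : ∀ i, (A i).Finite) :
    ((xorFam univ A).ncard : ℤ) =
      ∑ l ∈ Icc 1 (Fintype.card ι), (-1 : ℤ) ^ (l - 1) * 2 ^ (l - 1) *
        ∑ S ∈ univ.filter (fun S : Finset ι ↦ S.card = l),
          ((⋂ i ∈ S, A i).ncard : ℤ) := by
  classical
  let U := (Set.finite_iUnion hfin).toFinset
  have hAU : ∀ i, A i ⊆ U := fun i x hx ↦ by simpa [U] using ⟨i, hx⟩
  let F : α → Finset ι := fun x ↦ univ.filter (fun i ↦ x ∈ A i)
  have hxor : xorFam univ A ⊆ U := by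
    intro x hx
    obtain ⟨i, hi⟩ := card_pos.1 (Odd.pos hx)
    exact hAU i (mem_filter.1 hi).2
  calc ((xorFam univ A).ncard : ℤ)
      = ∑ x ∈ U, if Odd #(F x) then 1 else 0 := by
        rw [Set.ncard_eq_sum_ite hxor]
        exact sum_congr rfl fun x _ ↦ if_congr Iff.rfl rfl rfl
    _ = ∑ x ∈ U, ∑ l ∈ Icc 1 (Fintype.card ι), (-1 : ℤ) ^ (l - 1) * 2 ^ (l - 1) *
          ∑ S ∈ univ.filter (fun S : Finset ι ↦ S.card = l),
            (if S ⊆ F x then 1 else 0 : ℤ) := by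
        simp only [sum_Icc_neg_one_pow_mul_two_pow_mul_card_subsets]
    _ = _ := by
        rw [sum_comm]
        refine sum_congr rfl fun l hl ↦ ?_
        rw [← mul_sum, sum_comm]
        refine congrArg _ (sum_congr rfl fun S hS ↦ ?_)
        obtain ⟨i, hi⟩ : S.Nonempty := card_pos.1 ((mem_filter.1 hS).2 ▸ (mem_Icc.1 hl).1)
        rw [Set.ncard_eq_sum_ite fun x hx ↦ hAU i (Set.mem_iInter₂.1 hx i hi)]
        simp [F, subset_iff]

theorem stmt1 {α : Type*} (k : ℕ) (A : Fin k → Set α) (hfin : ∀ i, (A i).Finite) :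
    ((xorFam Finset.univ A).ncard : ℤ) =
      ∑ l ∈ Finset.Icc 1 k, (-1 : ℤ) ^ (l - 1) * 2 ^ (l - 1) *
        ∑ S ∈ Finset.univ.filter (fun S : Finset (Fin k) => S.card = l),
          ((⋂ i ∈ S, A i).ncard : ℤ) := by
  simpa using ncard_xorFam_univ A hfin
end

section
/- Let G = (V, E) be a finite simple graph, T a spanning tree of G rooted at r, and A ⊆ V. If δ(A) ∩ E(T) = {e(v₁), e(v₂), …, e(vₖ)} for k distinct non-root vertices v₁, …, vₖ, then either A or V \ A equals v₁↓ ⊕ v₂↓ ⊕ ⋯ ⊕ vₖ↓. -/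
/-! Both `A` and `X := v₁↓ ⊕ ⋯ ⊕ vₖ↓` change membership across a tree edge `e(x)` exactly when
`x` is one of the `vᵢ`: for `A` this is the hypothesis on `δ(A) ∩ E(T)`, for `X` it holds because
`x` lies in `vᵢ↓` iff its parent does, unless `x = vᵢ`. Hence whether `x ∈ A ↔ x ∈ X` holds does
not change from a vertex to its parent, so it is the same at every vertex as at the root. -/

open SimpleGraph

section Xor

variable {ι α : Type*} {s : Finset ι} {A : ι → Set α} {x y : α}

theorem mem_xorFam_iff_of_forall_mem_iff (h : ∀ i ∈ s, x ∈ A i ↔ y ∈ A i) :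
    x ∈ xorFam s A ↔ y ∈ xorFam s A := by
  classical
  simp only [xorFam, Set.mem_ofPred_eq, Finset.filter_congr h]

theorem mem_xorFam_iff_not_mem_of_forall_ne_mem_iff {j : ι} (hj : j ∈ s) (hxj : x ∈ A j)
    (hyj : y ∉ A j) (h : ∀ i ∈ s, i ≠ j → (x ∈ A i ↔ y ∈ A i)) :
    x ∈ xorFam s A ↔ y ∉ xorFam s A := by
  classical
  have hfilter : s.filter (fun i => x ∈ A i) = insert j (s.filter (fun i => y ∈ A i)) := by
    ext i
    by_cases hij : i = j
    · subst hij; simp [hj, hxj]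
    · simpa [hij] using h i
  have hj' : j ∉ s.filter (fun i => y ∈ A i) := by simp [hyj]
  simp only [xorFam, Set.mem_ofPred_eq, hfilter, Finset.card_insert_of_notMem hj',
    Nat.odd_add_one]

end Xor

theorem mk_mem_cut_iff {V : Type*} {G : SimpleGraph V} {A : Set V} {x y : V} (h : G.Adj x y) :
    s(x, y) ∈ cut G A ↔ (x ∈ A ↔ y ∉ A) := by
  constructor
  · rintro ⟨-, a, b, hab, ha, hb⟩
    rcases Sym2.eq_iff.mp hab with ⟨rfl, rfl⟩ | ⟨rfl, rfl⟩ <;> tauto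
  · intro hxy
    by_cases hx : x ∈ A
    · exact ⟨h, x, y, rfl, hx, hxy.mp hx⟩
    · exact ⟨h, y, x, Sym2.eq_swap, not_not.mp (mt hxy.mpr hx), hx⟩

section Tree

variable {V : Type*} {T : SimpleGraph V} {r : V}

theorem SimpleGraph.IsAcyclic.eq_of_isPath (hT : T.IsAcyclic) {u w : V} {p q : T.Walk u w}
    (hp : p.IsPath) (hq : q.IsPath) : p = q :=
  congrArg Subtype.val ((hT.subsingleton_path u w).elim ⟨p, hp⟩ ⟨q, hq⟩)

theorem self_mem_desc (u : V) : u ∈ desc T r u := fun p _ => p.end_mem_support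

theorem mem_desc_iff_mem_support (hT : T.IsAcyclic) {u w : V} {q : T.Walk r u} (hq : q.IsPath) :
    u ∈ desc T r w ↔ w ∈ q.support := by
  refine ⟨fun h => h q hq, fun h p hp => ?_⟩
  rwa [hT.eq_of_isPath hp hq]

def IsParentMap (T : SimpleGraph V) (r : V) (π : V → V) : Prop :=
  ∀ x, x ≠ r → T.Adj x (π x) ∧ x ∈ desc T r (π x)

namespace IsParentMap

variable {π : V → V} (hπ : IsParentMap T r π) {x : V}

theorem exists_isPath_eq_concat (hT : T.IsAcyclic) (hx : x ≠ r) {q : T.Walk r x}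
    (hq : q.IsPath) :
    ∃ p : T.Walk r (π x), p.IsPath ∧ q = p.concat (hπ x hx).1.symm := by
  classical
  have hmem : π x ∈ q.support := (hπ x hx).2 q hq
  have hdrop : q.dropUntil (π x) hmem = (hπ x hx).1.symm.toWalk :=
    hT.eq_of_isPath (hq.dropUntil hmem) (hπ x hx).1.symm.isPath_toWalk
  refine ⟨q.takeUntil (π x) hmem, hq.takeUntil hmem, ?_⟩
  conv_lhs => rw [← q.take_spec hmem, hdrop]
  rfl

variable (hT : T.IsTree)
include hπ hT

theorem exists_isPath_support_eq (hx : x ≠ r) :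
    ∃ p : T.Walk r (π x), p.IsPath ∧ ∃ q : T.Walk r x, q.IsPath ∧ q.support = p.support ++ [x] := by
  obtain ⟨q, hq⟩ := (hT.existsUnique_path r x).exists
  obtain ⟨p, hp, rfl⟩ := hπ.exists_isPath_eq_concat hT.isAcyclic hx hq
  exact ⟨p, hp, _, hq, Walk.support_concat _ _⟩

theorem parent_not_mem_desc (hx : x ≠ r) : π x ∉ desc T r x := by
  obtain ⟨p, hp, q, hq, hsupp⟩ := hπ.exists_isPath_support_eq hT hx
  rw [mem_desc_iff_mem_support hT.isAcyclic hp]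
  intro hxp
  have hnodup := hq.support_nodup
  rw [hsupp] at hnodup
  exact List.disjoint_of_nodup_append hnodup hxp (List.mem_singleton_self x)

theorem mem_desc_iff_parent_mem_desc (hx : x ≠ r) {w : V} (hw : w ≠ x) :
    x ∈ desc T r w ↔ π x ∈ desc T r w := by
  obtain ⟨p, hp, q, hq, hsupp⟩ := hπ.exists_isPath_support_eq hT hx
  rw [mem_desc_iff_mem_support hT.isAcyclic hq, mem_desc_iff_mem_support hT.isAcyclic hp, hsupp]
  simp [hw]

theorem eq_of_mk_parent_eq {y : V} (hx : x ≠ r) (hy : y ≠ r) (h : s(x, π x) = s(y, π y)) :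
    x = y := by
  rcases Sym2.eq_iff.mp h with ⟨hxy, -⟩ | ⟨hx_eq, hy_eq⟩
  · exact hxy
  · have := (hπ y hy).2
    rw [← hx_eq, ← hy_eq] at this
    exact absurd this (hπ.parent_not_mem_desc hT hx)

theorem apply_eq_apply_root {β : Type*} {f : V → β} (hf : ∀ x, x ≠ r → f x = f (π x)) (x : V) :
    f x = f r := by
  suffices ∀ n x (q : T.Walk r x), q.IsPath → q.length = n → f x = f r by
    obtain ⟨q, hq⟩ := (hT.existsUnique_path r x).exists
    exact this _ x q hq rfl
  intro n
  induction n with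
  | zero => rintro x q - hlen; rw [Walk.eq_of_length_eq_zero hlen]
  | succ n ih =>
    intro x q hq hlen
    by_cases hx : x = r
    · rw [hx]
    obtain ⟨p, hp, rfl⟩ := hπ.exists_isPath_eq_concat hT.isAcyclic hx hq
    rw [Walk.length_concat] at hlen
    exact (hf x hx).trans (ih _ p hp (Nat.succ_injective hlen))

/-- Two vertex sets crossed by the same tree edges coincide up to complement. -/
theorem eq_or_univ_diff_eq {A B : Set V}
    (h : ∀ x, x ≠ r → ((x ∈ A ↔ π x ∉ A) ↔ (x ∈ B ↔ π x ∉ B))) :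
    A = B ∨ Set.univ \ A = B := by
  have hconst := hπ.apply_eq_apply_root hT (f := fun x => (x ∈ A ↔ x ∈ B))
    (fun x hx => propext (by have := h x hx; tauto))
  by_cases hr : r ∈ A ↔ r ∈ B
  · left; ext x; rw [hconst x]; exact hr
  · right; ext x
    have := hconst x
    simp only [eq_iff_iff] at this
    simp only [Set.mem_sdiff, Set.mem_univ, true_and]
    tauto

theorem crosses_xorFam_desc_iff {ι : Type*} [Fintype ι] {v : ι → V}
    (hinj : Function.Injective v) (hx : x ≠ r) :
    (x ∈ xorFam Finset.univ (fun i => desc T r (v i)) ↔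
      π x ∉ xorFam Finset.univ (fun i => desc T r (v i))) ↔ x ∈ Set.range v := by
  by_cases hv : x ∈ Set.range v
  · obtain ⟨j, rfl⟩ := hv
    refine iff_of_true (mem_xorFam_iff_not_mem_of_forall_ne_mem_iff (Finset.mem_univ j)
      (self_mem_desc _) (hπ.parent_not_mem_desc hT hx) fun i _ hij => ?_) ⟨j, rfl⟩
    exact hπ.mem_desc_iff_parent_mem_desc hT hx (hinj.ne hij)
  · refine iff_of_false (fun h => ?_) hv
    have := mem_xorFam_iff_of_forall_mem_iff fun i (_ : i ∈ Finset.univ) =>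
      hπ.mem_desc_iff_parent_mem_desc hT hx fun hi => hv ⟨i, hi⟩
    tauto

theorem mk_parent_mem_range_iff {ι : Type*} {v : ι → V} (hroot : ∀ i, v i ≠ r) (hx : x ≠ r) :
    s(x, π x) ∈ Set.range (fun i => s(v i, π (v i))) ↔ x ∈ Set.range v := by
  refine ⟨fun ⟨i, hi⟩ => ⟨i, hπ.eq_of_mk_parent_eq hT (hroot i) hx hi⟩, ?_⟩
  rintro ⟨i, rfl⟩
  exact ⟨i, rfl⟩

end IsParentMap

end Tree

theorem stmt7_general {V : Type*} (G T : SimpleGraph V) (hT : T.IsTree)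
    (hTG : T ≤ G) (r : V)
    (π : V → V) (hπ : ∀ x, x ≠ r → T.Adj x (π x) ∧ x ∈ desc T r (π x))
    (A : Set V) (k : ℕ) (v : Fin k → V) (hinj : Function.Injective v)
    (hroot : ∀ i, v i ≠ r)
    (hcross : cut G A ∩ T.edgeSet = Set.range (fun i => s(v i, π (v i)))) :
    A = xorFam Finset.univ (fun i => desc T r (v i)) ∨
      Set.univ \ A = xorFam Finset.univ (fun i => desc T r (v i)) := by
  refine IsParentMap.eq_or_univ_diff_eq hπ hT fun x hx => ?_
  have hA : (x ∈ A ↔ π x ∉ A) ↔ x ∈ Set.range v := by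
    rw [← mk_mem_cut_iff (hTG (hπ x hx).1), ← IsParentMap.mk_parent_mem_range_iff hπ hT hroot hx,
      ← hcross]
    exact (and_iff_left (hπ x hx).1).symm
  rw [hA, IsParentMap.crosses_xorFam_desc_iff hπ hT hinj hx]

theorem stmt7 {V : Type*} [Fintype V] (G T : SimpleGraph V) (hT : T.IsTree)
    (hTG : T ≤ G) (r : V)
    (π : V → V) (hπ : ∀ x, x ≠ r → T.Adj x (π x) ∧ x ∈ desc T r (π x))
    (A : Set V) (k : ℕ) (v : Fin k → V) (hinj : Function.Injective v)
    (hroot : ∀ i, v i ≠ r)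
    (hcross : cut G A ∩ T.edgeSet = Set.range (fun i => s(v i, π (v i)))) :
    A = xorFam Finset.univ (fun i => desc T r (v i)) ∨
      Set.univ \ A = xorFam Finset.univ (fun i => desc T r (v i)) :=
  stmt7_general G T hT hTG r π hπ A k v hinj hroot hcross
end

section
/- Let G = (V, E) be a finite simple graph, T a spanning tree of G rooted at r, and S = {x₁, x₂, …, xₖ} a set of k ≥ 3 distinct non-root vertices. Assume: (i) there exist x, y ∈ S with x ≠ y and x↓ ∩ y↓ ≠ ∅; and (ii) for every x' ∈ S there exists y' ∈ S with y' ∉ x'↓. Then there exists a ∈ S such that ⋂_{x ∈ S} δ(x↓) = ⋂_{x ∈ S \ {a}} δ(x↓); in particular |⋂_{x ∈ S} δ(x↓)| equals the (k−1)-wise intersection cardinality over S \ {a}. -/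
/-!
The sets `x↓` are laminar: two of them are nested or disjoint. Among the members of `S` whose
subtree contains the subtree of another member, pick `q` with `q↓` maximal. By (ii) some `m ∈ S`
has `m ∉ q↓`, and maximality forces `m↓ ∩ q↓ = ∅`. If `p↓ ⊆ q↓` with `p ≠ q`, an edge in
`δ(p↓) ∩ δ(m↓)` has one end in `p↓ ⊆ q↓` and the other in `m↓`, outside `q↓`; so it lies in
`δ(q↓)`, and the cut of `q` can be dropped from the intersection.
-/

open SimpleGraph Set

lemma SimpleGraph.Walk.mem_support_takeUntil_or_mem_support_takeUntil {V : Type*}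
    [DecidableEq V] {G : SimpleGraph V} {a b v w : V} (p : G.Walk a b) (hv : v ∈ p.support)
    (hw : w ∈ p.support) :
    w ∈ (p.takeUntil v hv).support ∨ v ∈ (p.takeUntil w hw).support :=
  (List.prefix_or_prefix_of_prefix (p.support_takeUntil_prefix_support hw)
      (p.support_takeUntil_prefix_support hv)).imp
    (fun h => h.subset (p.takeUntil w hw).end_mem_support)
    (fun h => h.subset (p.takeUntil v hv).end_mem_support)

section desc

variable {V : Type*} {T : SimpleGraph V} {r : V}

lemma mem_desc_self (v : V) : v ∈ desc T r v := fun p _ => p.end_mem_support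

lemma mem_desc_of_mem_support (hT : T.IsTree) {u v : V} {p : T.Walk r u} (hp : p.IsPath)
    (hv : v ∈ p.support) : u ∈ desc T r v := by
  intro q hq
  rwa [(hT.existsUnique_path r u).unique hq hp]

lemma desc_subset_desc {v w : V} (h : w ∈ desc T r v) : desc T r w ⊆ desc T r v := by
  classical
  intro u hu p hp
  exact p.support_takeUntil_subset_support (hu p hp) (h _ (hp.takeUntil (hu p hp)))

lemma desc_subset_or_subset_of_nonempty (hT : T.IsTree) {v w : V}
    (h : (desc T r v ∩ desc T r w).Nonempty) :
    desc T r v ⊆ desc T r w ∨ desc T r w ⊆ desc T r v := by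
  classical
  obtain ⟨u, huv, huw⟩ := h
  obtain ⟨p, hp, -⟩ := hT.existsUnique_path r u
  exact (p.mem_support_takeUntil_or_mem_support_takeUntil (huv p hp) (huw p hp)).imp
    (fun h => desc_subset_desc (mem_desc_of_mem_support hT (hp.takeUntil _) h))
    (fun h => desc_subset_desc (mem_desc_of_mem_support hT (hp.takeUntil _) h))

end desc

lemma cut_inter_cut_subset_cut {V : Type*} {G : SimpleGraph V} {A B C : Set V} (hAB : A ⊆ B)
    (hCB : Disjoint C B) : cut G A ∩ cut G C ⊆ cut G B := by
  rintro e ⟨⟨heG, u, w, rfl, hu, -⟩, -, u', w', he, hu', -⟩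
  refine ⟨heG, u, w, rfl, hAB hu, ?_⟩
  rcases Sym2.eq_iff.mp he with ⟨rfl, -⟩ | ⟨-, rfl⟩
  · exact absurd (hAB hu) (disjoint_left.mp hCB hu')
  · exact disjoint_left.mp hCB hu'

lemma exists_subset_disjoint_of_laminar {ι α : Type*} [Finite ι] {D : ι → Set α} {x : ι → α}
    (hx : ∀ i, x i ∈ D i) (hlam : ∀ i j, (D i ∩ D j).Nonempty → D i ⊆ D j ∨ D j ⊆ D i)
    (hmeet : ∃ i j, i ≠ j ∧ (D i ∩ D j).Nonempty) (hout : ∀ i, ∃ j, x j ∉ D i) :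
    ∃ p q m, p ≠ q ∧ m ≠ q ∧ D p ⊆ D q ∧ Disjoint (D m) (D q) := by
  set nesting := {q | ∃ p, p ≠ q ∧ D p ⊆ D q}
  have hne : nesting.Nonempty := by
    obtain ⟨i, j, hij, hij_meet⟩ := hmeet
    rcases hlam i j hij_meet with h | h
    exacts [⟨j, i, hij, h⟩, ⟨i, j, hij.symm, h⟩]
  obtain ⟨q, ⟨p, hpq, hpq_sub⟩, hmax⟩ := nesting.toFinite.exists_maximalFor D nesting hne
  obtain ⟨m, hm⟩ := hout q
  have hmq : m ≠ q := fun h => hm (h ▸ hx m)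
  refine ⟨p, q, m, hpq, hmq, hpq_sub, disjoint_left.mpr fun z hzm hzq => hm ?_⟩
  have hsub : D m ⊆ D q := by
    rcases hlam m q ⟨z, hzm, hzq⟩ with h | h
    exacts [h, hmax ⟨q, hmq.symm, h⟩ h]
  exact hsub (hx m)

theorem stmt13_general {V : Type*} (G T : SimpleGraph V) (hT : T.IsTree)
    (r : V) (k : ℕ) (x : Fin k → V)
    (h₁ : ∃ i j : Fin k, i ≠ j ∧ (desc T r (x i) ∩ desc T r (x j)).Nonempty)
    (h₂ : ∀ i : Fin k, ∃ j : Fin k, x j ∉ desc T r (x i)) :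
    ∃ a : Fin k,
      (⋂ i, cut G (desc T r (x i))) =
        (⋂ i, ⋂ (_ : i ≠ a), cut G (desc T r (x i))) ∧
      (⋂ i, cut G (desc T r (x i))).ncard =
        (⋂ i, ⋂ (_ : i ≠ a), cut G (desc T r (x i))).ncard := by
  obtain ⟨p, q, m, hpq, hmq, hsub, hdisj⟩ :=
    exists_subset_disjoint_of_laminar (D := fun i => desc T r (x i)) (fun i => mem_desc_self _)
      (fun _ _ => desc_subset_or_subset_of_nonempty hT) h₁ h₂
  have hq : (⋂ i, ⋂ (_ : i ≠ q), cut G (desc T r (x i))) ⊆ cut G (desc T r (x q)) :=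
    fun e he => cut_inter_cut_subset_cut hsub hdisj
      ⟨mem_iInter₂.mp he p hpq, mem_iInter₂.mp he m hmq⟩
  have heq := (iInf_split_single _ q).trans (inf_eq_right.mpr hq)
  exact ⟨q, heq, congrArg ncard heq⟩

theorem stmt13 {V : Type*} [Fintype V] (G T : SimpleGraph V) (hT : T.IsTree)
    (hTG : T ≤ G) (r : V) (k : ℕ) (hk : 3 ≤ k) (x : Fin k → V)
    (hinj : Function.Injective x) (hroot : ∀ i, x i ≠ r)
    (h₁ : ∃ i j : Fin k, i ≠ j ∧ (desc T r (x i) ∩ desc T r (x j)).Nonempty)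
    (h₂ : ∀ i : Fin k, ∃ j : Fin k, x j ∉ desc T r (x i)) :
    ∃ a : Fin k,
      (⋂ i, cut G (desc T r (x i))) =
        (⋂ i, ⋂ (_ : i ≠ a), cut G (desc T r (x i))) ∧
      (⋂ i, cut G (desc T r (x i))).ncard =
        (⋂ i, ⋂ (_ : i ≠ a), cut G (desc T r (x i))).ncard :=
  stmt13_general G T hT r k x h₁ h₂
end
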